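/- (Contraction lemma) For any weighted graph G and any two distinct vertices i and j, the identity of rational functions α_i(G) = α_i(G∖j) + λ_{i∼j}/α_j(G∖i) holds; explicitly, μ(G)/μ(G∖i) = μ(G∖j)/μ(G∖{i,j}) + λ_{i∼j} · μ(G∖{i,j})/μ(G∖i), where λ_{i∼j} = −(Σ_{c ∈ [i→j]} λ_c · μ(G∖c)²)/μ(G∖{i,j})². -/

import Mathlib

open Polynomial
open scoped Classical

/-- A matching of the weighted graph with edge weights `lam`, inside the vertex set `A`:
a set of pairs `(j,k)` with `j < k`, `lam j k ≠ 0`, endpoints in `A`,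
no two pairs sharing a vertex. -/
def IsMatching {n : ℕ} (lam : Fin n → Fin n → ℝ) (A : Finset (Fin n))
    (M : Finset (Fin n × Fin n)) : Prop :=
  (∀ e ∈ M, e.1 < e.2 ∧ lam e.1 e.2 ≠ 0 ∧ e.1 ∈ A ∧ e.2 ∈ A) ∧
  ∀ e ∈ M, ∀ f ∈ M, e ≠ f → e.1 ≠ f.1 ∧ e.1 ≠ f.2 ∧ e.2 ≠ f.1 ∧ e.2 ≠ f.2

/-- The vertices covered by a matching. -/
def mVerts {n : ℕ} (M : Finset (Fin n × Fin n)) : Finset (Fin n) :=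
  M.image Prod.fst ∪ M.image Prod.snd

/-- The finite set of matchings inside the vertex set `A`. -/
noncomputable def matchings {n : ℕ} (lam : Fin n → Fin n → ℝ) (A : Finset (Fin n)) :
    Finset (Finset (Fin n × Fin n)) :=
  Finset.univ.filter fun M => IsMatching lam A M

/-- The weighted matching polynomial of the induced weighted subgraph on the vertex set `A`
(the matching polynomial of the empty graph is `1`). -/
noncomputable def mu {n : ℕ} (r : Fin n → ℝ) (lam : Fin n → Fin n → ℝ)
    (A : Finset (Fin n)) : Polynomial ℝ :=
  ∑ M ∈ matchings lam A,
    (∏ i ∈ A \ mVerts M, (X - C (r i))) * C (∏ e ∈ M, lam e.1 e.2)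

/-- The multivariate matching polynomial evaluated at the complex numbers `x 1, …, x n`. -/
noncomputable def muC {n : ℕ} (lam : Fin n → Fin n → ℝ) (x : Fin n → ℂ) : ℂ :=
  ∑ M ∈ matchings lam (Finset.univ : Finset (Fin n)),
    (∏ i ∈ Finset.univ \ mVerts M, x i) * ∏ e ∈ M, (lam e.1 e.2 : ℂ)

/-- The constant `B_G`: for `n ≥ 3` the maximum over vertices `j` and sets
`A ⊆ [n] ∖ {j}` with `|A| = n - 2` of `∑_{k ∈ A} (-λ_{jk})`; `-λ_{12}/4` for `n = 2`;
`0` for `n = 1`. -/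
noncomputable def BG (n : ℕ) (lam : Fin n → Fin n → ℝ) : ℝ :=
  if 3 ≤ n then
    sSup {S : ℝ | ∃ j : Fin n, ∃ A : Finset (Fin n),
      j ∉ A ∧ A.card = n - 2 ∧ S = ∑ k ∈ A, -lam j k}
  else if h : n = 2 then -lam ⟨0, by omega⟩ ⟨1, by omega⟩ / 4
  else 0

/-- `l` is a path from `i` to `j` inside the vertex set `A`: a nonempty list of distinct
vertices of `A`, starting at `i`, ending at `j`, with consecutive vertices joined by
edges of nonzero weight. -/
def IsPathIn {n : ℕ} (lam : Fin n → Fin n → ℝ) (A : Finset (Fin n)) (i j : Fin n)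
    (l : List (Fin n)) : Prop :=
  l ≠ [] ∧ l.Nodup ∧ (∀ v ∈ l, v ∈ A) ∧ l.head? = some i ∧ l.getLast? = some j ∧
    l.Chain' fun u v => lam u v ≠ 0

/-- `λ_c`: the product of `-λ_e` over the edges `e` of the path `c` (equal to `1` for a
trivial path). -/
def pathWeight {n : ℕ} (lam : Fin n → Fin n → ℝ) (l : List (Fin n)) : ℝ :=
  ((l.zip l.tail).map fun p => -lam p.1 p.2).prod

/-- A real polynomial viewed as a rational function. -/
noncomputable def toRF (p : Polynomial ℝ) : RatFunc ℝ :=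
  algebraMap (Polynomial ℝ) (RatFunc ℝ) p

/-- The graph continued fraction `α_v = μ(A)/μ(A ∖ v)` as a rational function. -/
noncomputable def alpha {n : ℕ} (r : Fin n → ℝ) (lam : Fin n → Fin n → ℝ) (v : Fin n)
    (A : Finset (Fin n)) : RatFunc ℝ :=
  toRF (mu r lam A) / toRF (mu r lam (A.erase v))

/-- `λ_{i∼j} = -(∑_{c ∈ [i→j]} λ_c · μ(A∖c)²) / μ(A∖{i,j})²` as a rational function. -/
noncomputable def lamSim {n : ℕ} (r : Fin n → ℝ) (lam : Fin n → Fin n → ℝ) (i j : Fin n)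
    (A : Finset (Fin n)) : RatFunc ℝ :=
  -(∑ᶠ l ∈ {l : List (Fin n) | IsPathIn lam A i j l},
      toRF (C (pathWeight lam l) * mu r lam (A \ l.toFinset) ^ 2)) /
    toRF (mu r lam ((A.erase i).erase j)) ^ 2

/-- The value of a rational function at `θ`, taken after cancelling common factors;
`none` encodes the value `∞` (a pole). -/
noncomputable def valAt (f : RatFunc ℝ) (θ : ℝ) : Option ℝ :=
  if f.denom.eval θ = 0 then none else some (f.num.eval θ / f.denom.eval θ)

/-- The set `0_{θ,A}` of θ-essential vertices: `m_θ(A∖v) = m_θ(A) - 1`. -/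
def zeroSet {n : ℕ} (r : Fin n → ℝ) (lam : Fin n → Fin n → ℝ) (θ : ℝ)
    (A : Finset (Fin n)) : Set (Fin n) :=
  {v | v ∈ A ∧
    (mu r lam A).rootMultiplicity θ = (mu r lam (A.erase v)).rootMultiplicity θ + 1}

/-- The set `∞_{θ,A}`: `m_θ(A∖v) = m_θ(A) + 1`. -/
def infSet {n : ℕ} (r : Fin n → ℝ) (lam : Fin n → Fin n → ℝ) (θ : ℝ)
    (A : Finset (Fin n)) : Set (Fin n) :=
  {v | v ∈ A ∧
    (mu r lam (A.erase v)).rootMultiplicity θ = (mu r lam A).rootMultiplicity θ + 1}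

/-- The set `+_{θ,A}`: `m_θ(A∖v) = m_θ(A)` and `α_v(A)(θ) > 0`. -/
def plusSet {n : ℕ} (r : Fin n → ℝ) (lam : Fin n → Fin n → ℝ) (θ : ℝ)
    (A : Finset (Fin n)) : Set (Fin n) :=
  {v | v ∈ A ∧
    (mu r lam (A.erase v)).rootMultiplicity θ = (mu r lam A).rootMultiplicity θ ∧
    ∃ t : ℝ, valAt (alpha r lam v A) θ = some t ∧ 0 < t}

/-- The set `−_{θ,A}`: `m_θ(A∖v) = m_θ(A)` and `α_v(A)(θ) < 0`. -/
def minusSet {n : ℕ} (r : Fin n → ℝ) (lam : Fin n → Fin n → ℝ) (θ : ℝ)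
    (A : Finset (Fin n)) : Set (Fin n) :=
  {v | v ∈ A ∧
    (mu r lam (A.erase v)).rootMultiplicity θ = (mu r lam A).rootMultiplicity θ ∧
    ∃ t : ℝ, valAt (alpha r lam v A) θ = some t ∧ t < 0}

/-- The frontier `∂0_{θ,A}`: vertices not in `0_{θ,A}` with a neighbor in `0_{θ,A}`. -/
def frontierZero {n : ℕ} (r : Fin n → ℝ) (lam : Fin n → Fin n → ℝ) (θ : ℝ)
    (A : Finset (Fin n)) : Set (Fin n) :=
  {v | v ∈ A ∧ v ∉ zeroSet r lam θ A ∧ ∃ w ∈ zeroSet r lam θ A, lam v w ≠ 0}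

/-- The underlying simple graph: edges are the pairs with nonzero edge weight. -/
def wGraph {n : ℕ} (lam : Fin n → Fin n → ℝ) : SimpleGraph (Fin n) :=
  SimpleGraph.fromRel fun j k => lam j k ≠ 0

/-!
Expanding μ(A) at a vertex i over the partner of i in a matching gives
μ(A) = (x - r_i) μ(A∖i) + Σ_w λ_{iw} μ(A∖{i,w}). Applying this to μ(A) and to μ(A∖j), and
splitting every path from i to j into its first edge i w and a path from w to j in A∖i,
an induction on A yields the Christoffel–Darboux type identity
  μ(A∖i) μ(A∖j) - μ(A) μ(A∖{i,j}) = Σ_{c : i → j} λ_c μ(A∖c)².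
Matching polynomials are monic, hence nonzero, so dividing this identity by
μ(G∖i) μ(G∖{i,j}) gives the contraction lemma.
-/

section Matchings

variable {n : ℕ} {lam : Fin n → Fin n → ℝ} {A : Finset (Fin n)} {M : Finset (Fin n × Fin n)}

lemma mem_mVerts {v : Fin n} : v ∈ mVerts M ↔ ∃ e ∈ M, e.1 = v ∨ e.2 = v := by
  simp only [mVerts, Finset.mem_union, Finset.mem_image]
  aesop

lemma mVerts_insert (e : Fin n × Fin n) :
    mVerts (insert e M) = insert e.1 (insert e.2 (mVerts M)) := by
  ext v
  simp only [mem_mVerts, Finset.mem_insert, exists_eq_or_imp]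
  aesop

@[simp]
lemma mem_matchings : M ∈ matchings lam A ↔ IsMatching lam A M := by
  simp [matchings]

lemma IsMatching.mVerts_subset (h : IsMatching lam A M) : mVerts M ⊆ A := by
  intro v hv
  obtain ⟨e, he, rfl | rfl⟩ := mem_mVerts.mp hv
  exacts [(h.1 e he).2.2.1, (h.1 e he).2.2.2]

lemma isMatching_erase_iff {i : Fin n} :
    IsMatching lam (A.erase i) M ↔ IsMatching lam A M ∧ i ∉ mVerts M := by
  simp only [IsMatching, Finset.mem_erase, mem_mVerts, not_exists, not_and, not_or]
  grind

lemma isMatching_insert_iff {e : Fin n × Fin n} (he : e ∉ M) :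
    IsMatching lam A (insert e M) ↔
      (e.1 < e.2 ∧ lam e.1 e.2 ≠ 0 ∧ e.1 ∈ A ∧ e.2 ∈ A) ∧
        IsMatching lam ((A.erase e.1).erase e.2) M := by
  simp only [IsMatching, Finset.forall_mem_insert, Finset.mem_erase]
  grind

end Matchings

lemma degree_prod_X_sub_C {ι : Type*} (b : ι → ℝ) (s : Finset ι) :
    (∏ i ∈ s, (X - C (b i))).degree = (s.card : WithBot ℕ) := by
  simp [degree_prod, degree_X_sub_C]

section MatchingPolynomial

variable {n : ℕ} (r : Fin n → ℝ) {lam : Fin n → Fin n → ℝ} {A : Finset (Fin n)}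
  {M : Finset (Fin n × Fin n)}

noncomputable def matchingTerm (r : Fin n → ℝ) (lam : Fin n → Fin n → ℝ) (A : Finset (Fin n))
    (M : Finset (Fin n × Fin n)) : ℝ[X] :=
  (∏ i ∈ A \ mVerts M, (X - C (r i))) * C (∏ e ∈ M, lam e.1 e.2)

lemma mu_eq_sum_matchingTerm :
    mu r lam A = ∑ M ∈ matchings lam A, matchingTerm r lam A M := rfl

lemma degree_matchingTerm_lt (hM : IsMatching lam A M) (hne : M ≠ ∅) :
    (matchingTerm r lam A M).degree < (A.card : WithBot ℕ) := by
  obtain ⟨e, he⟩ := Finset.nonempty_iff_ne_empty.mpr hne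
  have hcard : (A \ mVerts M).card < A.card :=
    Finset.card_lt_card <| Finset.sdiff_ssubset hM.mVerts_subset
      ⟨e.1, mem_mVerts.mpr ⟨e, he, Or.inl rfl⟩⟩
  calc (matchingTerm r lam A M).degree
      ≤ (∏ i ∈ A \ mVerts M, (X - C (r i))).degree + (C (∏ e ∈ M, lam e.1 e.2)).degree :=
        degree_mul_le _ _
    _ ≤ ((A \ mVerts M).card : WithBot ℕ) := by
        rw [degree_prod_X_sub_C]
        simpa using add_le_add_right (degree_C_le (a := ∏ e ∈ M, lam e.1 e.2)) _
    _ < A.card := by exact_mod_cast hcard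

lemma mu_monic (lam : Fin n → Fin n → ℝ) (A : Finset (Fin n)) : (mu r lam A).Monic := by
  have hempty : ∅ ∈ matchings lam A := by simp [IsMatching]
  rw [mu_eq_sum_matchingTerm, ← Finset.add_sum_erase _ _ hempty]
  have hlead : matchingTerm r lam A ∅ = ∏ i ∈ A, (X - C (r i)) := by
    simp [matchingTerm, mVerts]
  rw [hlead]
  refine (monic_prod_X_sub_C r A).add_of_left ?_
  rw [degree_prod_X_sub_C]
  refine (degree_sum_le _ _).trans_lt ((Finset.sup_lt_iff (WithBot.bot_lt_coe _)).mpr ?_)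
  intro M hM
  obtain ⟨hne, hM⟩ := Finset.mem_erase.mp hM
  exact degree_matchingTerm_lt r (mem_matchings.mp hM) hne

lemma mu_ne_zero (lam : Fin n → Fin n → ℝ) (A : Finset (Fin n)) : mu r lam A ≠ 0 :=
  (mu_monic r lam A).ne_zero

end MatchingPolynomial

section VertexRecurrence

variable {n : ℕ} (r : Fin n → ℝ) {lam : Fin n → Fin n → ℝ} {A : Finset (Fin n)}
  {M : Finset (Fin n × Fin n)} {i : Fin n}

-- The edge `{i, w}` as `IsMatching` encodes it: smaller endpoint first.
def sortedPair (i w : Fin n) : Fin n × Fin n := (min i w, max i w)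

lemma IsMatching.mem_mVerts_iff_exists_sortedPair (hM : IsMatching lam A M) :
    i ∈ mVerts M ↔ ∃ w ∈ A.erase i, sortedPair i w ∈ M := by
  rw [mem_mVerts]
  constructor
  · rintro ⟨e, he, hi⟩
    obtain ⟨hlt, -, h1, h2⟩ := hM.1 e he
    rcases hi with rfl | rfl
    · refine ⟨e.2, Finset.mem_erase.mpr ⟨hlt.ne', h2⟩, ?_⟩
      simpa [sortedPair, min_eq_left hlt.le, max_eq_right hlt.le] using he
    · refine ⟨e.1, Finset.mem_erase.mpr ⟨hlt.ne, h1⟩, ?_⟩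
      simpa [sortedPair, min_eq_right hlt.le, max_eq_left hlt.le] using he
  · rintro ⟨w, -, hw⟩
    refine ⟨_, hw, ?_⟩
    rcases le_total i w with h | h
    · simp [sortedPair, min_eq_left h]
    · simp [sortedPair, max_eq_left h]

lemma IsMatching.eq_of_sortedPair_mem (hM : IsMatching lam A M) {w w' : Fin n}
    (hw : sortedPair i w ∈ M) (hw' : sortedPair i w' ∈ M) : w = w' := by
  by_contra hne
  have hdisj := hM.2 _ hw _ hw'
  simp only [sortedPair, ne_eq, Prod.mk.injEq] at hdisj
  grind

lemma matchingTerm_insert {e : Fin n × Fin n} (he : e ∉ M) :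
    matchingTerm r lam A (insert e M) =
      C (lam e.1 e.2) * matchingTerm r lam ((A.erase e.1).erase e.2) M := by
  have hverts : A \ mVerts (insert e M) = (A.erase e.1).erase e.2 \ mVerts M := by
    ext v
    simp only [mVerts_insert, Finset.mem_sdiff, Finset.mem_insert, Finset.mem_erase]
    tauto
  rw [matchingTerm, matchingTerm, hverts, Finset.prod_insert he, C_mul]
  ring

lemma matchingTerm_of_notMem_mVerts (hi : i ∈ A) (hiM : i ∉ mVerts M) :
    matchingTerm r lam A M = (X - C (r i)) * matchingTerm r lam (A.erase i) M := by
  have hverts : A \ mVerts M = insert i ((A.erase i) \ mVerts M) := by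
    ext v
    simp only [Finset.mem_sdiff, Finset.mem_insert, Finset.mem_erase]
    constructor
    · tauto
    · rintro (rfl | h) <;> tauto
  rw [matchingTerm, matchingTerm, hverts, Finset.prod_insert (by simp), mul_assoc]

lemma sum_matchingTerm_filter_notMem_mVerts (hi : i ∈ A) :
    ∑ M ∈ matchings lam A with i ∉ mVerts M, matchingTerm r lam A M =
      (X - C (r i)) * mu r lam (A.erase i) := by
  have hfilter : {M ∈ matchings lam A | i ∉ mVerts M} = matchings lam (A.erase i) := by
    ext M
    simp [isMatching_erase_iff]
  rw [hfilter, mu_eq_sum_matchingTerm, Finset.mul_sum]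
  refine Finset.sum_congr rfl fun M hM => matchingTerm_of_notMem_mVerts r hi ?_
  exact (isMatching_erase_iff.mp (mem_matchings.mp hM)).2

lemma notMem_of_isMatching_erase {e : Fin n × Fin n}
    (hM : IsMatching lam ((A.erase e.1).erase e.2) M) : e ∉ M := fun he => by
  simpa using hM.mVerts_subset (mem_mVerts.mpr ⟨e, he, Or.inl rfl⟩)

lemma sum_matchingTerm_filter_mem {e : Fin n × Fin n} (hlt : e.1 < e.2) (h1 : e.1 ∈ A)
    (h2 : e.2 ∈ A) :
    ∑ M ∈ matchings lam A with e ∈ M, matchingTerm r lam A M =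
      C (lam e.1 e.2) * mu r lam ((A.erase e.1).erase e.2) := by
  by_cases hlam : lam e.1 e.2 = 0
  · rw [hlam, C_0, zero_mul, Finset.sum_eq_zero]
    intro M hM
    simp only [Finset.mem_filter, mem_matchings] at hM
    exact absurd hlam (hM.1.1 e hM.2).2.1
  rw [mu_eq_sum_matchingTerm, Finset.mul_sum]
  refine Finset.sum_nbij' (fun M => M.erase e) (insert e) ?_ ?_ ?_ ?_ ?_
  · intro M hM
    simp only [Finset.mem_filter, mem_matchings] at hM ⊢
    rw [← Finset.insert_erase hM.2, isMatching_insert_iff (Finset.notMem_erase e M)] at hM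
    exact hM.1.2
  · intro M hM
    rw [mem_matchings] at hM
    simp only [Finset.mem_filter, mem_matchings, Finset.mem_insert_self, and_true]
    exact (isMatching_insert_iff (notMem_of_isMatching_erase hM)).mpr ⟨⟨hlt, hlam, h1, h2⟩, hM⟩
  · intro M hM
    exact Finset.insert_erase (Finset.mem_filter.mp hM).2
  · intro M hM
    exact Finset.erase_insert (notMem_of_isMatching_erase (mem_matchings.mp hM))
  · intro M hM
    simp only [Finset.mem_filter] at hM
    rw [← matchingTerm_insert r (Finset.notMem_erase e M), Finset.insert_erase hM.2]

lemma sum_matchingTerm_filter_sortedPair_mem (hsym : ∀ j k, lam j k = lam k j) (hi : i ∈ A)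
    {w : Fin n} (hw : w ∈ A.erase i) :
    ∑ M ∈ matchings lam A with sortedPair i w ∈ M, matchingTerm r lam A M =
      C (lam i w) * mu r lam ((A.erase i).erase w) := by
  obtain ⟨hwi, hwA⟩ := Finset.mem_erase.mp hw
  rcases lt_or_gt_of_ne hwi with h | h
  · have hpair : sortedPair i w = (w, i) := by simp [sortedPair, h.le]
    rw [hpair, sum_matchingTerm_filter_mem r h hwA hi, hsym, Finset.erase_right_comm]
  · have hpair : sortedPair i w = (i, w) := by simp [sortedPair, h.le]
    rw [hpair, sum_matchingTerm_filter_mem r h hi hwA]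

theorem mu_vertex_recurrence (hsym : ∀ j k, lam j k = lam k j) (hi : i ∈ A) :
    mu r lam A = (X - C (r i)) * mu r lam (A.erase i) +
      ∑ w ∈ A.erase i, C (lam i w) * mu r lam ((A.erase i).erase w) := by
  have hcover : {M ∈ matchings lam A | i ∈ mVerts M} =
      (A.erase i).biUnion fun w => {M ∈ matchings lam A | sortedPair i w ∈ M} := by
    ext M
    simp only [Finset.mem_filter, Finset.mem_biUnion, mem_matchings]
    constructor
    · rintro ⟨hM, hiM⟩
      obtain ⟨w, hw, hwM⟩ := hM.mem_mVerts_iff_exists_sortedPair.mp hiM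
      exact ⟨w, hw, hM, hwM⟩
    · rintro ⟨w, hw, hM, hwM⟩
      exact ⟨hM, hM.mem_mVerts_iff_exists_sortedPair.mpr ⟨w, hw, hwM⟩⟩
  have hdisj : Set.PairwiseDisjoint (A.erase i : Set (Fin n))
      fun w => {M ∈ matchings lam A | sortedPair i w ∈ M} := by
    intro w _ w' _ hne
    refine Finset.disjoint_filter.mpr fun M hM hw hw' => hne ?_
    exact (mem_matchings.mp hM).eq_of_sortedPair_mem hw hw'
  rw [mu_eq_sum_matchingTerm, ← Finset.sum_filter_add_sum_filter_not _ (i ∈ mVerts ·),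
    sum_matchingTerm_filter_notMem_mVerts r hi, hcover, Finset.sum_biUnion hdisj,
    Finset.sum_congr rfl fun w hw => sum_matchingTerm_filter_sortedPair_mem r hsym hi hw, add_comm]

end VertexRecurrence

section Paths

variable {n : ℕ} {lam : Fin n → Fin n → ℝ} {A : Finset (Fin n)} {i j : Fin n}
  {l : List (Fin n)}

lemma setOf_isPathIn_finite (lam : Fin n → Fin n → ℝ) (A : Finset (Fin n)) (i j : Fin n) :
    {l | IsPathIn lam A i j l}.Finite :=
  (List.finite_length_le (Fin n) n).subset fun _ hl => by
    simpa using hl.2.1.length_le_card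

noncomputable def pathFinset (lam : Fin n → Fin n → ℝ) (A : Finset (Fin n)) (i j : Fin n) :
    Finset (List (Fin n)) :=
  (setOf_isPathIn_finite lam A i j).toFinset

@[simp]
lemma mem_pathFinset : l ∈ pathFinset lam A i j ↔ IsPathIn lam A i j l := by
  simp [pathFinset]

-- `IsPathIn` with the deprecated `List.Chain'` unfolded to `List.IsChain`.
lemma isPathIn_iff : IsPathIn lam A i j l ↔ l ≠ [] ∧ l.Nodup ∧ (∀ v ∈ l, v ∈ A) ∧
    l.head? = some i ∧ l.getLast? = some j ∧ l.IsChain (fun u v => lam u v ≠ 0) :=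
  Iff.rfl

lemma isPathIn_cons_cons_iff {u w : Fin n} {t : List (Fin n)} :
    IsPathIn lam A i j (u :: w :: t) ↔
      u = i ∧ i ∈ A ∧ lam i w ≠ 0 ∧ IsPathIn lam (A.erase i) w j (w :: t) := by
  simp only [isPathIn_iff, ne_eq, reduceCtorEq, not_false_eq_true, List.nodup_cons, List.mem_cons,
    List.head?_cons, Option.some.injEq, List.getLast?_cons_cons,
    List.isChain_cons_cons, Finset.mem_erase, true_and]
  grind

lemma IsPathIn.exists_eq_cons (h : IsPathIn lam A i j l) : ∃ t, l = i :: t := by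
  obtain ⟨hne, -, -, hhead, -⟩ := h
  obtain ⟨u, t, rfl⟩ := List.exists_cons_of_ne_nil hne
  exact ⟨t, by simpa using hhead⟩

lemma IsPathIn.start_mem (h : IsPathIn lam A i j l) : i ∈ A := by
  obtain ⟨t, rfl⟩ := h.exists_eq_cons
  exact h.2.2.1 i List.mem_cons_self

lemma IsPathIn.exists_eq_cons_cons (h : IsPathIn lam A i j l) (hij : i ≠ j) :
    ∃ w t, l = i :: w :: t := by
  obtain ⟨_ | ⟨w, t⟩, rfl⟩ := h.exists_eq_cons
  · exact absurd (by simpa using h.2.2.2.2.1) hij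
  · exact ⟨w, t, rfl⟩

lemma isPathIn_self_iff (hj : j ∈ A) : IsPathIn lam A j j l ↔ l = [j] := by
  constructor
  · rintro ⟨hne, hnd, -, hhead, hlast, -⟩
    match l, hne, hnd, hhead, hlast with
    | [_], _, _, hhead, _ => simpa using hhead
    | u :: w :: t, _, hnd, hhead, hlast =>
      simp only [List.head?_cons, Option.some.injEq, List.getLast?_cons_cons] at hhead hlast
      subst hhead
      exact absurd (List.mem_of_mem_getLast? hlast) (List.nodup_cons.mp hnd).1
  · rintro rfl
    simp [isPathIn_iff, hj]

end Paths

section PathSum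

variable {n : ℕ} (r : Fin n → ℝ) {lam : Fin n → Fin n → ℝ} {A : Finset (Fin n)} {i j : Fin n}

noncomputable def pathSum (r : Fin n → ℝ) (lam : Fin n → Fin n → ℝ) (A : Finset (Fin n))
    (i j : Fin n) : ℝ[X] :=
  ∑ l ∈ pathFinset lam A i j, C (pathWeight lam l) * mu r lam (A \ l.toFinset) ^ 2

lemma pathSum_self (lam : Fin n → Fin n → ℝ) (hj : j ∈ A) :
    pathSum r lam A j j = mu r lam (A.erase j) ^ 2 := by
  have hpaths : pathFinset lam A j j = {[j]} := by
    ext l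
    simp [isPathIn_self_iff hj]
  simp [pathSum, hpaths, pathWeight, Finset.sdiff_singleton_eq_erase]

lemma pathSum_eq_sum_erase (hij : i ≠ j) (hi : i ∈ A) :
    pathSum r lam A i j = ∑ w ∈ A.erase i, C (-lam i w) * pathSum r lam (A.erase i) w j := by
  rw [← Finset.sum_filter_of_ne (p := fun w => lam i w ≠ 0) fun w _ h hlam => h (by simp [hlam])]
  simp only [pathSum, Finset.mul_sum]
  rw [Finset.sum_sigma']
  symm
  -- the default `i` is never used: a path from `i` to `j ≠ i` has at least two vertices
  refine Finset.sum_nbij' (fun p => i :: p.2) (fun l => ⟨l.tail.head?.getD i, l.tail⟩)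
    ?_ ?_ ?_ ?_ ?_
  · rintro ⟨w, l⟩ hp
    simp only [Finset.mem_sigma, Finset.mem_filter, mem_pathFinset] at hp ⊢
    obtain ⟨⟨-, hlam⟩, hl⟩ := hp
    obtain ⟨t, rfl⟩ := hl.exists_eq_cons
    exact isPathIn_cons_cons_iff.mpr ⟨rfl, hi, hlam, hl⟩
  · intro l hl
    rw [mem_pathFinset] at hl
    obtain ⟨w, t, rfl⟩ := hl.exists_eq_cons_cons hij
    obtain ⟨-, -, hlam, hl⟩ := isPathIn_cons_cons_iff.mp hl
    simp only [Finset.mem_sigma, Finset.mem_filter, mem_pathFinset, List.tail_cons,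
      List.head?_cons, Option.getD_some]
    exact ⟨⟨hl.start_mem, hlam⟩, hl⟩
  · rintro ⟨w, l⟩ hp
    simp only [Finset.mem_sigma, mem_pathFinset] at hp
    obtain ⟨t, rfl⟩ := hp.2.exists_eq_cons
    rfl
  · intro l hl
    rw [mem_pathFinset] at hl
    obtain ⟨w, t, rfl⟩ := hl.exists_eq_cons_cons hij
    rfl
  · rintro ⟨w, l⟩ hp
    simp only [Finset.mem_sigma, mem_pathFinset] at hp
    obtain ⟨t, rfl⟩ := hp.2.exists_eq_cons
    have hverts : A \ (i :: w :: t).toFinset = A.erase i \ (w :: t).toFinset := by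
      ext v
      simp only [List.toFinset_cons, Finset.mem_sdiff, Finset.mem_insert, Finset.mem_erase]
      tauto
    simp only [pathWeight, List.tail_cons, List.zip_cons_cons, List.map_cons, List.prod_cons,
      hverts, C_mul]
    ring

lemma toRF_pathSum (lam : Fin n → Fin n → ℝ) (A : Finset (Fin n)) (i j : Fin n) :
    toRF (pathSum r lam A i j) = ∑ᶠ l ∈ {l | IsPathIn lam A i j l},
      toRF (C (pathWeight lam l) * mu r lam (A \ l.toFinset) ^ 2) := by
  rw [← Set.Finite.coe_toFinset (setOf_isPathIn_finite lam A i j), finsum_mem_coe_finset,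
    pathSum, toRF, map_sum]
  rfl

theorem mu_erase_mul_mu_erase (hsym : ∀ j k, lam j k = lam k j) (hi : i ∈ A) (hj : j ∈ A)
    (hij : i ≠ j) :
    mu r lam (A.erase i) * mu r lam (A.erase j) =
      mu r lam A * mu r lam ((A.erase i).erase j) + pathSum r lam A i j := by
  induction A using Finset.strongInduction generalizing i j with
  | H A ih =>
  set B := A.erase i
  have hjB : j ∈ B := Finset.mem_erase.mpr ⟨hij.symm, hj⟩
  have hstep : ∀ w ∈ B.erase j,
      mu r lam B * (C (lam i w) * mu r lam ((B.erase j).erase w)) =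
        C (lam i w) * mu r lam (B.erase w) * mu r lam (B.erase j) +
          C (-lam i w) * pathSum r lam B w j := by
    intro w hw
    obtain ⟨hwj, hwB⟩ := Finset.mem_erase.mp hw
    have h := ih B (Finset.erase_ssubset hi) hwB hjB hwj
    rw [Finset.erase_right_comm (s := B) (a := w)] at h
    rw [map_neg]
    linear_combination (-C (lam i w)) * h
  have hsum := Finset.sum_congr rfl hstep
  rw [← Finset.mul_sum, Finset.sum_add_distrib, ← Finset.sum_mul] at hsum
  have hexpand := mu_vertex_recurrence r hsym hi
  rw [← Finset.add_sum_erase _ _ hjB] at hexpand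
  have hexpand' := mu_vertex_recurrence r hsym (Finset.mem_erase.mpr ⟨hij, hi⟩ : i ∈ A.erase j)
  rw [show (A.erase j).erase i = B.erase j from Finset.erase_right_comm] at hexpand'
  have hpath := pathSum_eq_sum_erase r (lam := lam) hij hi
  rw [← Finset.add_sum_erase _ _ hjB, pathSum_self r lam hjB] at hpath
  rw [hexpand, hexpand', hpath, map_neg]
  linear_combination hsum

end PathSum

theorem alpha_eq_alpha_erase_add_lamSim_div {n : ℕ} (r : Fin n → ℝ) {lam : Fin n → Fin n → ℝ}
    (hsym : ∀ j k, lam j k = lam k j) {A : Finset (Fin n)} {i j : Fin n} (hi : i ∈ A)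
    (hj : j ∈ A) (hij : i ≠ j) :
    alpha r lam i A =
      alpha r lam i (A.erase j) + lamSim r lam i j A / alpha r lam j (A.erase i) := by
  have hidentity := congrArg toRF (mu_erase_mul_mu_erase r hsym hi hj hij)
  have hμi : toRF (mu r lam (A.erase i)) ≠ 0 := RatFunc.algebraMap_ne_zero (mu_ne_zero r lam _)
  have hμij : toRF (mu r lam ((A.erase i).erase j)) ≠ 0 :=
    RatFunc.algebraMap_ne_zero (mu_ne_zero r lam _)
  rw [alpha, alpha, alpha, lamSim, ← toRF_pathSum, Finset.erase_right_comm (a := j)]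
  simp only [toRF, map_mul, map_add] at hidentity hμi hμij ⊢
  field_simp
  linear_combination (-1 : RatFunc ℝ) * hidentity

theorem stmt_3_general (n : ℕ) (r : Fin n → ℝ) (lam : Fin n → Fin n → ℝ)
    (hsym : ∀ j k, lam j k = lam k j) (i j : Fin n) (hij : i ≠ j) :
    alpha r lam i Finset.univ =
      alpha r lam i (Finset.univ.erase j) +
        lamSim r lam i j Finset.univ / alpha r lam j (Finset.univ.erase i) :=
  alpha_eq_alpha_erase_add_lamSim_div r hsym (Finset.mem_univ i) (Finset.mem_univ j) hij

/-- (Contraction lemma) `α_i(G) = α_i(G∖j) + λ_{i∼j}/α_j(G∖i)` as an identity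
of rational functions, i.e.
`μ(G)/μ(G∖i) = μ(G∖j)/μ(G∖{i,j}) + λ_{i∼j}·μ(G∖{i,j})/μ(G∖i)`. -/
theorem stmt_3 (n : ℕ) (hn : 0 < n) (r : Fin n → ℝ) (lam : Fin n → Fin n → ℝ)
    (hsym : ∀ j k, lam j k = lam k j) (hnonpos : ∀ j k, lam j k ≤ 0)
    (hdiag : ∀ i, lam i i = 0) (i j : Fin n) (hij : i ≠ j) :
    alpha r lam i Finset.univ =
      alpha r lam i (Finset.univ.erase j) +
        lamSim r lam i j Finset.univ / alpha r lam j (Finset.univ.erase i) :=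
  stmt_3_general n r lam hsym i j hij
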